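/- Let N be odd, a₁ ≠ a₂ in Z/N with a₁ − a₂ invertible mod N, and let S₁, S₂ be the chirps S_j[τ] = (1/√N)e^{(2πi/N)(2⁻¹ a_j τ² + b_j τ)}. Then |⟨S₁, S₂⟩| = 1/√N. -/

import Mathlib

/-!
The correlation equals `N⁻¹ ∑ₜ ψ (q t)` with `ψ` the standard character of `ZMod N` and
`q t = e t² + d t`, `e = 2⁻¹ (a₁ - a₂)`, `d = b₁ - b₂`, so it suffices that `S = ∑ₜ ψ (q t)` has
`|S|² = N`. Expanding `S * conj S` and substituting `t = s + u`, the phase becomes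
`q (s + u) - q s = q u + s (2 e u)`; the sum over `s` is a character sum that vanishes unless
`2 e u = 0`, that is unless `u = 0`, since `2 e` is a unit. Only the diagonal term `u = 0` survives, and it contributes `N`.
-/

noncomputable def eN (N : ℕ) (x : ZMod N) : ℂ :=
  Complex.exp (2 * Real.pi * Complex.I * (x.val : ℂ) / N)

noncomputable def innerZ (N : ℕ) [NeZero N] (S₁ S₂ : ZMod N → ℂ) : ℂ :=
  ∑ t : ZMod N, S₁ t * (starRingEnd ℂ) (S₂ t)

noncomputable def chirp (N : ℕ) (a b : ZMod N) : ZMod N → ℂ :=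
  fun τ => (1 / Real.sqrt N : ℝ) * eN N ((((N + 1) / 2 : ℕ) : ZMod N) * a * τ ^ 2 + b * τ)

open Finset ComplexConjugate

namespace AddChar

variable {R : Type*} [CommRing R] [Fintype R] {ψ : AddChar R ℂ}

theorem sum_quadratic_mul_conj (hψ : ψ.IsPrimitive) {e : R} (he : IsUnit (2 * e)) (d : R) :
    (∑ t, ψ (e * t ^ 2 + d * t)) * conj (∑ t, ψ (e * t ^ 2 + d * t)) = Fintype.card R := by
  classical
  set q : R → R := fun t ↦ e * t ^ 2 + d * t
  have shift (s u : R) : q (s + u) - q s = q u + s * (2 * e * u) := by ring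
  calc (∑ t, ψ (q t)) * conj (∑ t, ψ (q t))
      = ∑ s, ∑ u, ψ (q (s + u) - q s) := by
        rw [map_sum, sum_mul_sum, sum_comm]
        refine sum_congr rfl fun s _ ↦ ?_
        refine Fintype.sum_equiv (Equiv.addLeft s).symm _ _ fun t ↦ ?_
        simp [sub_eq_add_neg, map_add_eq_mul, map_neg_eq_conj]
    _ = ∑ u, ψ (q u) * ∑ s, ψ (s * (2 * e * u)) := by
        rw [sum_comm]
        simp only [shift, map_add_eq_mul, mul_sum]
    _ = Fintype.card R := by
        simp [sum_mulShift _ hψ, he.mul_right_eq_zero, q]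

theorem norm_sum_quadratic (hψ : ψ.IsPrimitive) {e : R} (he : IsUnit (2 * e)) (d : R) :
    ‖∑ t, ψ (e * t ^ 2 + d * t)‖ = √(Fintype.card R) := by
  have h := sum_quadratic_mul_conj hψ he d
  rw [Complex.mul_conj, Complex.normSq_eq_norm_sq] at h
  rw [← Real.sqrt_sq (norm_nonneg _)]
  exact congrArg Real.sqrt (mod_cast h)

end AddChar

theorem eN_eq_stdAddChar (N : ℕ) [NeZero N] (x : ZMod N) : eN N x = ZMod.stdAddChar x := by
  rw [ZMod.stdAddChar_apply, ZMod.toCircle_apply, eN]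

theorem ZMod.two_mul_natCast_half_succ {N : ℕ} (hN : Odd N) :
    (2 : ZMod N) * ((N + 1) / 2 : ℕ) = 1 := by
  obtain ⟨k, rfl⟩ := hN
  rw [show (2 * k + 1 + 1) / 2 = k + 1 by omega]
  have h := ZMod.natCast_self (2 * k + 1)
  push_cast at h ⊢
  linear_combination h

theorem innerZ_chirp (N : ℕ) [NeZero N] (a₁ a₂ b₁ b₂ : ZMod N) :
    innerZ N (chirp N a₁ b₁) (chirp N a₂ b₂) = (1 / N : ℝ) *
      ∑ t, ZMod.stdAddChar ((((N + 1) / 2 : ℕ) : ZMod N) * (a₁ - a₂) * t ^ 2 + (b₁ - b₂) * t) := by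
  have hN : (0 : ℝ) < N := by exact_mod_cast Nat.pos_of_neZero N
  rw [innerZ, mul_sum]
  refine sum_congr rfl fun t _ ↦ ?_
  simp only [chirp, eN_eq_stdAddChar, map_mul, Complex.conj_ofReal, ← AddChar.map_neg_eq_conj]
  rw [mul_mul_mul_comm, ← AddChar.map_add_eq_mul, ← Complex.ofReal_mul, one_div_mul_one_div,
    Real.mul_self_sqrt hN.le]
  ring_nf

theorem chirp_cross_correlation_general (N : ℕ) [NeZero N] (hN : Odd N)
    (a₁ a₂ b₁ b₂ : ZMod N) (hunit : IsUnit (a₁ - a₂)) :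
    ‖innerZ N (chirp N a₁ b₁) (chirp N a₂ b₂)‖ = 1 / Real.sqrt N := by
  have h2e : IsUnit (2 * ((((N + 1) / 2 : ℕ) : ZMod N) * (a₁ - a₂))) := by
    rwa [← mul_assoc, ZMod.two_mul_natCast_half_succ hN, one_mul]
  rw [innerZ_chirp, norm_mul, AddChar.norm_sum_quadratic (ZMod.isPrimitive_stdAddChar N) h2e,
    ZMod.card, Complex.norm_real, Real.norm_of_nonneg (by positivity),
    one_div_mul_eq_div, Real.sqrt_div_self']

/-- Cross-correlation of chirps associated to distinct transversal lines has
magnitude 1/√N. -/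
theorem chirp_cross_correlation (N : ℕ) [NeZero N] (hN : Odd N)
    (a₁ a₂ b₁ b₂ : ZMod N) (hne : a₁ ≠ a₂) (hunit : IsUnit (a₁ - a₂)) :
    ‖innerZ N (chirp N a₁ b₁) (chirp N a₂ b₂)‖ = 1 / Real.sqrt N :=
  chirp_cross_correlation_general N hN a₁ a₂ b₁ b₂ hunit
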